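/- arXiv:1103.3755 — 3 statements merged into one kernel-verified Lean document; each statement's English description precedes it below -/
import Mathlib

section
/- The family of Coxeter transformations (θ_n)_{n≥0} is the unique family of additive maps φ_n : ℤY_n → ℤY_n such that, writing φ for their direct sum on ℤY: φ(S_|) = −S_|, φ(S_•) = −S_•, φ(a / b) = −φ(a) * φ(b) for all a, b ∈ ℤY, and φ(S_• * (a / (S_• * b))) = φ(S_• * a) / φ(S_• * b) − φ(S_• * a) * φ(S_• * b) for all a, b ∈ ℤY. In particular these conditions force φ_n(P_x) = −I_x for every n and every x ∈ Y_n. -/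
/-!
The `P_x` are unitriangular in the `S_x` for the Tamari order, so they form a basis of `ℤY` and an
additive (resp. biadditive) map is determined by its values on the `P_x` (resp. pairs of them).
Everything then rests on four identities:
`P_x / P_y = P_{x/y}`, `P_x * P_y = P_{x∖y}`, `I_x * I_y = I_{x/y}` and
`I_{(|,u)} / I_{(|,v)} - I_{(|,u)} * I_{(|,v)} = -I_{(|,(u,v))}`.
The two product identities hold because, once `size u` is fixed, `u/v ≤ z ≤ u∖v` determines
`(u, v)`, so the intervals `[u/v, u∖v]` partition the lower ideal of `x∖y` and the upper ideal
of `x/y`; the last one because the trees above `((|,u),v)` are those of the form `((|,u'),v')`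
with `u ≤ u'`, `v ≤ v'`, together with those above `(|,(u,v))`.

Given these, the conditions hold for `φ(P_x) = -I_x` on pairs of `P`'s, hence everywhere.
Conversely, every tree other than `|` and `•` is `x/(|,y) = (x,y)` with `x ≠ |`, or
`(|,(u,v)) = • * (P_u / (• * P_v))`, so the third and fourth conditions determine
`φ(P_x)` by induction on the size of `x`.
-/

/-- A planar binary tree: either the trivial tree (a leaf) or an ordered pair of
planar binary trees. -/
inductive PBT : Type
  | leaf : PBT
  | node : PBT → PBT → PBT
  deriving DecidableEq

namespace PBT

/-- Number of internal vertices of a planar binary tree. -/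
def size : PBT → ℕ
  | leaf => 0
  | node a b => a.size + b.size + 1

/-- One covering move of the Tamari order: `Rot x y` holds when `y` is obtained
from `x` by replacing some subtree of the form `((a,b),c)` by `(a,(b,c))`. -/
inductive Rot : PBT → PBT → Prop
  | rot (a b c : PBT) : Rot (node (node a b) c) (node a (node b c))
  | left {a a' : PBT} (b : PBT) : Rot a a' → Rot (node a b) (node a' b)
  | right (a : PBT) {b b' : PBT} : Rot b b' → Rot (node a b) (node a b')

/-- The Tamari order: reflexive-transitive closure of `Rot`. -/
def tle (x y : PBT) : Prop := Relation.ReflTransGen Rot x y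

/-- Grafting of `x` on the leftmost leaf of `y` : the operation `x / y`. -/
def overT : PBT → PBT → PBT
  | x, leaf => x
  | x, node y₁ y₂ => node (overT x y₁) y₂

/-- Grafting of `y` on the rightmost leaf of `x` : the operation `x ∖ y`. -/
def under : PBT → PBT → PBT
  | leaf, y => y
  | node x₁ x₂, y => node x₁ (under x₂ y)

theorem Rot.size_eq {x y : PBT} (h : Rot x y) : x.size = y.size := by
  induction h <;> simp [size] <;> omega

theorem tle.size_eq {x y : PBT} (h : tle x y) : x.size = y.size := by
  induction h with
  | refl => rfl
  | tail _ h ih => rw [ih, h.size_eq]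

theorem finite_size_le (n : ℕ) : {z : PBT | z.size ≤ n}.Finite := by
  induction n with
  | zero =>
    apply Set.Finite.subset (Set.finite_singleton leaf)
    rintro (_ | ⟨a, b⟩) hz
    · simp
    · simp [size] at hz
  | succ n ih =>
    apply Set.Finite.subset ((Set.Finite.image2 node ih ih).insert leaf)
    rintro (_ | ⟨a, b⟩) hz
    · simp
    · simp only [Set.mem_setOf_eq, size] at hz
      exact Set.mem_insert_iff.mpr
        (Or.inr (Set.mem_image2.mpr ⟨a, by simp only [Set.mem_setOf_eq]; omega, b, by simp only [Set.mem_setOf_eq]; omega, rfl⟩))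

theorem finite_size (n : ℕ) : {z : PBT | z.size = n}.Finite :=
  (finite_size_le n).subset fun _ hz => le_of_eq hz

theorem finite_tle_right (x : PBT) : {y : PBT | tle y x}.Finite :=
  (finite_size x.size).subset fun _ hy => hy.size_eq

theorem finite_tle_left (x : PBT) : {y : PBT | tle x y}.Finite :=
  (finite_size x.size).subset fun _ hy => hy.size_eq.symm

theorem finite_interval (x y : PBT) :
    {z : PBT | tle (overT x y) z ∧ tle z (under x y)}.Finite :=
  (finite_tle_right (under x y)).subset fun _ hz => hz.2

end PBT

/-- The free abelian group `ℤY = ⊕ₙ ℤYₙ` on the set of all planar binary trees. -/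
abbrev ZY : Type := PBT →₀ ℤ

namespace PBT

/-- The basis element `S_x` of `ℤY`. -/
noncomputable def S (x : PBT) : ZY := Finsupp.single x 1

/-- The class `P_x = ∑_{y ≤ x} S_y` of the projective module. -/
noncomputable def P (x : PBT) : ZY := ∑ y ∈ (finite_tle_right x).toFinset, S y

/-- The class `I_x = ∑_{y ≥ x} S_y` of the injective module. -/
noncomputable def I (x : PBT) : ZY := ∑ y ∈ (finite_tle_left x).toFinset, S y

/-- The Loday-Ronco product on basis elements:
`S_x * S_y = ∑_{x/y ≤ z ≤ x∖y} S_z`. -/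
noncomputable def starB (x y : PBT) : ZY := ∑ z ∈ (finite_interval x y).toFinset, S z

/-- Bilinear extension of a product defined on basis elements. -/
noncomputable def bilin (f : PBT → PBT → ZY) (a b : ZY) : ZY :=
  a.sum fun x ax => b.sum fun y byy => (ax * byy) • f x y

/-- The product `/` on `ℤY`, with `S_x / S_y = S_{x/y}`. -/
noncomputable def overM : ZY → ZY → ZY := bilin fun x y => S (x.overT y)

/-- The product `∖` on `ℤY`, with `S_x ∖ S_y = S_{x∖y}`. -/
noncomputable def underM : ZY → ZY → ZY := bilin fun x y => S (x.under y)

/-- The Loday-Ronco product `*` on `ℤY`. -/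
noncomputable def starM : ZY → ZY → ZY := bilin starB

/-- The unique planar binary tree `•` with one internal vertex. -/
def dot : PBT := node leaf leaf

end PBT

namespace PBT

theorem size_overT (x y : PBT) : (overT x y).size = x.size + y.size := by
  induction y with
  | leaf => rfl
  | node y₁ y₂ ih _ => simp only [overT, size, ih]; omega

theorem overT_node_leaf (x y : PBT) : overT x (node leaf y) = node x y := rfl

theorem size_under (x y : PBT) : (under x y).size = x.size + y.size := by
  induction x with
  | leaf => simp [under, size]
  | node x₁ x₂ _ ih => simp only [under, size, ih]; omega

theorem eq_of_size_eq_of_size_le_one {x y : PBT} (h : x.size = y.size) (hx : x.size ≤ 1) :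
    x = y := by
  rcases x with _ | ⟨_ | _, _ | _⟩ <;> rcases y with _ | ⟨_ | _, _ | _⟩ <;>
    simp only [size] at h hx ⊢ <;> omega

/-- Strictly increasing along `Rot`: this gives antisymmetry of `tle`, and well-foundedness of
the unitriangular change of basis between `S` and `P`. -/
def rank : PBT → ℕ
  | leaf => 0
  | node a b => rank a + rank b + b.size

theorem Rot.rank_lt {x y : PBT} (h : Rot x y) : rank x < rank y := by
  induction h with
  | rot => simp only [rank, size]; omega
  | left => simp only [rank]; omega
  | right _ h => simp only [rank, h.size_eq]; omega

theorem tle.rank_le {x y : PBT} (h : tle x y) : rank x ≤ rank y := by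
  induction h with
  | refl => exact le_rfl
  | tail _ h ih => exact ih.trans h.rank_lt.le

theorem tle.rank_lt {x y : PBT} (h : tle x y) (hne : x ≠ y) : rank x < rank y := by
  cases h with
  | refl => exact absurd rfl hne
  | tail h₁ h₂ => exact (tle.rank_le h₁).trans_lt h₂.rank_lt

theorem tle_refl (x : PBT) : tle x x := .refl

theorem tle_antisymm {x y : PBT} (h₁ : tle x y) (h₂ : tle y x) : x = y := by
  by_contra hne
  exact (h₁.rank_lt hne).not_ge h₂.rank_le

theorem tle_node {a a' b b' : PBT} (ha : tle a a') (hb : tle b b') :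
    tle (node a b) (node a' b') :=
  (ha.lift (node · b) fun _ _ => Rot.left b).trans (hb.lift (node a') fun _ _ => Rot.right a')

theorem Rot.overT_left {u u' : PBT} (v : PBT) (h : Rot u u') : Rot (overT u v) (overT u' v) := by
  induction v with
  | leaf => exact h
  | node _ v₂ ih _ => exact Rot.left v₂ ih

theorem Rot.overT_right (u : PBT) {v v' : PBT} (h : Rot v v') : Rot (overT u v) (overT u v') := by
  induction h with
  | rot a b c => exact Rot.rot (overT u a) b c
  | left b _ ih => exact Rot.left b ih
  | right a h => exact Rot.right (overT u a) h

theorem tle_overT {u u' v v' : PBT} (hu : tle u u') (hv : tle v v') :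
    tle (overT u v) (overT u' v') :=
  (hu.lift (overT · v) fun _ _ => Rot.overT_left v).trans
    (hv.lift (overT u') fun _ _ => Rot.overT_right u')

theorem Rot.under_left {u u' : PBT} (v : PBT) (h : Rot u u') : Rot (under u v) (under u' v) := by
  induction h with
  | rot a b c => exact Rot.rot a b (under c v)
  | left b h => exact Rot.left (under b v) h
  | right a _ ih => exact Rot.right a ih

theorem Rot.under_right (u : PBT) {v v' : PBT} (h : Rot v v') : Rot (under u v) (under u v') := by
  induction u with
  | leaf => exact h
  | node u₁ _ _ ih => exact Rot.right u₁ ih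

theorem tle_under {u u' v v' : PBT} (hu : tle u u') (hv : tle v v') :
    tle (under u v) (under u' v') :=
  (hu.lift (under · v) fun _ _ => Rot.under_left v).trans
    (hv.lift (under u') fun _ _ => Rot.under_right u')

theorem Rot.exists_of_node_leaf {x z : PBT} (h : Rot (node leaf x) z) :
    ∃ x', Rot x x' ∧ z = node leaf x' := by
  cases h with
  | left _ h => nomatch h
  | right _ h => exact ⟨_, h, rfl⟩

theorem tle.exists_of_node_leaf {x z : PBT} (h : tle (node leaf x) z) :
    ∃ x', tle x x' ∧ z = node leaf x' := by
  induction h with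
  | refl => exact ⟨x, tle_refl x, rfl⟩
  | tail _ h ih =>
    obtain ⟨x', hx', rfl⟩ := ih
    obtain ⟨x'', h'', rfl⟩ := h.exists_of_node_leaf
    exact ⟨x'', hx'.tail h'', rfl⟩

theorem Rot.exists_of_overT {z x y : PBT} (h : Rot z (overT x y)) :
    ∃ u v, z = overT u v ∧ (Rot u x ∧ v = y ∨ u = x ∧ Rot v y) := by
  induction y generalizing z with
  | leaf => exact ⟨z, leaf, rfl, .inl ⟨h, rfl⟩⟩
  | node y₁ y₂ ih _ =>
    change Rot z (node (overT x y₁) y₂) at h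
    generalize hp : overT x y₁ = p at h
    cases h with
    | rot a b c =>
      exact ⟨x, node (node y₁ b) c, by rw [← hp]; rfl, .inr ⟨rfl, .rot y₁ b c⟩⟩
    | left _ h =>
      subst hp
      obtain ⟨u, v, rfl, ⟨hu, rfl⟩ | ⟨rfl, hv⟩⟩ := ih h
      · exact ⟨u, _, rfl, .inl ⟨hu, rfl⟩⟩
      · exact ⟨u, node v y₂, rfl, .inr ⟨rfl, .left y₂ hv⟩⟩
    | right _ h => exact ⟨x, node y₁ _, by rw [← hp]; rfl, .inr ⟨rfl, .right y₁ h⟩⟩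

theorem exists_overT_of_tle_overT {z x y : PBT} (h : tle z (overT x y)) :
    ∃ u v, z = overT u v ∧ tle u x ∧ tle v y := by
  induction h using Relation.ReflTransGen.head_induction_on with
  | refl => exact ⟨x, y, rfl, tle_refl x, tle_refl y⟩
  | head hr _ ih =>
    obtain ⟨u, v, rfl, hu, hv⟩ := ih
    obtain ⟨u', v', rfl, ⟨hu', rfl⟩ | ⟨rfl, hv'⟩⟩ := hr.exists_of_overT
    · exact ⟨u', v', rfl, hu.head hu', hv⟩
    · exact ⟨u', v', rfl, hu, hv.head hv'⟩

/-- For `m ≤ size z`, the unique pair `(u, v)` with `size u = m` and `u/v ≤ z ≤ u∖v`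
(`split_mem`, `split_eq_of_tle_of_tle`). -/
def split : PBT → ℕ → PBT × PBT
  | leaf, _ => (leaf, leaf)
  | node a b, m =>
    if m ≤ a.size then ((split a m).1, node (split a m).2 b)
    else (node a (split b (m - a.size - 1)).1, (split b (m - a.size - 1)).2)

theorem split_zero (z : PBT) : split z 0 = (leaf, z) := by
  induction z with
  | leaf => rfl
  | node a b iha => simp [split, iha]

theorem split_size_self (z : PBT) : split z z.size = (z, leaf) := by
  induction z with
  | leaf => rfl
  | node a b _ ihb =>
    have hm : a.size + b.size + 1 - a.size - 1 = b.size := by omega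
    simp [split, size, hm, ihb]

theorem split_overT (x y : PBT) : split (overT x y) x.size = (x, y) := by
  induction y with
  | leaf => exact split_size_self x
  | node y₁ y₂ ih => simp [overT, split, size_overT, ih]

theorem split_under (x y : PBT) : split (under x y) x.size = (x, y) := by
  induction x with
  | leaf => exact split_zero y
  | node x₁ x₂ _ ih =>
    have hm : x₁.size + x₂.size + 1 - x₁.size - 1 = x₂.size := by omega
    simp [under, split, size, hm, ih]

theorem tle_node_under (u w b : PBT) : tle (node (under u w) b) (under u (node w b)) := by
  induction u with
  | leaf => exact tle_refl _
  | node u₁ u₂ _ ih => exact .head (.rot u₁ (under u₂ w) b) (tle_node (tle_refl u₁) ih)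

theorem overT_node_tle (a u v : PBT) : tle (overT (node a u) v) (node a (overT u v)) := by
  induction v with
  | leaf => exact tle_refl _
  | node v₁ v₂ ih => exact .tail (tle_node ih (tle_refl v₂)) (.rot a (overT u v₁) v₂)

theorem split_mem {z : PBT} {m : ℕ} (hm : m ≤ z.size) :
    tle (overT (split z m).1 (split z m).2) z ∧ tle z (under (split z m).1 (split z m).2) := by
  induction z generalizing m with
  | leaf =>
    obtain rfl : m = 0 := by simpa [size] using hm
    exact ⟨tle_refl _, tle_refl _⟩
  | node a b iha ihb =>
    simp only [size] at hm
    simp only [split]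
    split_ifs with h
    · obtain ⟨h₁, h₂⟩ := iha h
      exact ⟨tle_node h₁ (tle_refl b),
        (tle_node h₂ (tle_refl b)).trans (tle_node_under _ _ _)⟩
    · obtain ⟨h₁, h₂⟩ := ihb (m := m - a.size - 1) (by omega)
      exact ⟨(overT_node_tle _ _ _).trans (tle_node (tle_refl a) h₁),
        tle_node (tle_refl a) h₂⟩

theorem Rot.split_mono {z z' : PBT} (h : Rot z z') (m : ℕ) :
    tle (split z m).1 (split z' m).1 ∧ tle (split z m).2 (split z' m).2 := by
  induction h generalizing m with
  | rot a b c =>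
    have hm : m - (a.size + b.size + 1) - 1 = m - a.size - 1 - b.size - 1 := by omega
    simp only [split, size, hm]
    split_ifs <;> first
      | omega
      | exact ⟨tle_refl _, tle_refl _⟩
      | exact ⟨tle_refl _, .single (.rot _ _ _)⟩
      | exact ⟨.single (.rot _ _ _), tle_refl _⟩
  | left b hr ih =>
    simp only [split, hr.size_eq]
    split_ifs
    · exact ⟨(ih m).1, tle_node (ih m).2 (tle_refl b)⟩
    · exact ⟨tle_node (.single hr) (tle_refl _), tle_refl _⟩
  | right a hr ih =>
    simp only [split]
    split_ifs
    · exact ⟨tle_refl _, tle_node (tle_refl _) (.single hr)⟩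
    · exact ⟨tle_node (tle_refl a) (ih _).1, (ih _).2⟩

theorem tle.split_mono {z z' : PBT} (h : tle z z') (m : ℕ) :
    tle (split z m).1 (split z' m).1 ∧ tle (split z m).2 (split z' m).2 := by
  induction h with
  | refl => exact ⟨tle_refl _, tle_refl _⟩
  | tail _ hr ih => exact ⟨ih.1.trans (hr.split_mono m).1, ih.2.trans (hr.split_mono m).2⟩

theorem split_eq_of_tle_of_tle {u v z : PBT} (h₁ : tle (overT u v) z) (h₂ : tle z (under u v)) :
    split z u.size = (u, v) := by
  have hlo := h₁.split_mono u.size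
  have hhi := h₂.split_mono u.size
  rw [split_overT] at hlo
  rw [split_under] at hhi
  exact Prod.ext (tle_antisymm hhi.1 hlo.1) (tle_antisymm hhi.2 hlo.2)

noncomputable def downset (x : PBT) : Finset PBT := (finite_tle_right x).toFinset

noncomputable def upset (x : PBT) : Finset PBT := (finite_tle_left x).toFinset

noncomputable def interval (x y : PBT) : Finset PBT := (finite_interval x y).toFinset

@[simp] theorem mem_downset {x z : PBT} : z ∈ downset x ↔ tle z x := Set.Finite.mem_toFinset _

@[simp] theorem mem_upset {x z : PBT} : z ∈ upset x ↔ tle x z := Set.Finite.mem_toFinset _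

@[simp] theorem mem_interval {x y z : PBT} :
    z ∈ interval x y ↔ tle (overT x y) z ∧ tle z (under x y) :=
  Set.Finite.mem_toFinset _

theorem downset_overT (x y : PBT) :
    downset (overT x y) = (downset x ×ˢ downset y).image fun p => overT p.1 p.2 := by
  ext z
  simp only [mem_downset, Finset.mem_image, Finset.mem_product, Prod.exists]
  constructor
  · intro hz
    obtain ⟨u, v, rfl, hu, hv⟩ := exists_overT_of_tle_overT hz
    exact ⟨u, v, ⟨hu, hv⟩, rfl⟩
  · rintro ⟨u, v, ⟨hu, hv⟩, rfl⟩
    exact tle_overT hu hv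

theorem injOn_overT_downset (x y : PBT) :
    Set.InjOn (fun p : PBT × PBT => overT p.1 p.2) ↑(downset x ×ˢ downset y) := by
  rintro ⟨u, v⟩ hp ⟨u', v'⟩ hp' h
  simp only [Finset.coe_product, Set.mem_prod, Finset.mem_coe, mem_downset] at hp hp'
  have hsize : u.size = u'.size := hp.1.size_eq.trans hp'.1.size_eq.symm
  rw [← split_overT u v, ← split_overT u' v', hsize]
  exact congrArg (split · u'.size) h

theorem downset_under (x y : PBT) :
    downset (under x y) = (downset x ×ˢ downset y).biUnion fun p => interval p.1 p.2 := by
  ext z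
  simp only [mem_downset, Finset.mem_biUnion, Finset.mem_product, mem_interval, Prod.exists]
  constructor
  · intro hz
    have hm := hz.split_mono x.size
    rw [split_under] at hm
    exact ⟨_, _, hm, split_mem (by rw [hz.size_eq, size_under]; omega)⟩
  · rintro ⟨u, v, ⟨hu, hv⟩, -, hz⟩
    exact hz.trans (tle_under hu hv)

theorem upset_overT (x y : PBT) :
    upset (overT x y) = (upset x ×ˢ upset y).biUnion fun p => interval p.1 p.2 := by
  ext z
  simp only [mem_upset, Finset.mem_biUnion, Finset.mem_product, mem_interval, Prod.exists]
  constructor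
  · intro hz
    have hm := hz.split_mono x.size
    rw [split_overT] at hm
    exact ⟨_, _, hm, split_mem (by rw [← hz.size_eq, size_overT]; omega)⟩
  · rintro ⟨u, v, ⟨hu, hv⟩, hz, -⟩
    exact (tle_overT hu hv).trans hz

theorem pairwiseDisjoint_interval {n : ℕ} {s t : Finset PBT} (hs : ∀ u ∈ s, u.size = n) :
    Set.PairwiseDisjoint ↑(s ×ˢ t) fun p : PBT × PBT => interval p.1 p.2 := by
  rintro ⟨u, v⟩ hp ⟨u', v'⟩ hp' hne
  simp only [Finset.coe_product, Set.mem_prod, Finset.mem_coe] at hp hp'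
  refine Finset.disjoint_left.2 fun z hz hz' => hne ?_
  rw [mem_interval] at hz hz'
  rw [← split_eq_of_tle_of_tle hz.1 hz.2, ← split_eq_of_tle_of_tle hz'.1 hz'.2,
    hs u hp.1, hs u' hp'.1]

theorem upset_node_leaf (x : PBT) : upset (node leaf x) = (upset x).image (node leaf) := by
  ext z
  simp only [mem_upset, Finset.mem_image]
  constructor
  · intro h
    obtain ⟨x', hx', rfl⟩ := h.exists_of_node_leaf
    exact ⟨x', hx', rfl⟩
  · rintro ⟨x', hx', rfl⟩
    exact tle_node (tle_refl leaf) hx'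

theorem tle_node_node_leaf {x y z : PBT} (h : tle (node (node leaf x) y) z) :
    (∃ x' y', tle x x' ∧ tle y y' ∧ z = node (node leaf x') y') ∨
      tle (node leaf (node x y)) z := by
  induction h with
  | refl => exact .inl ⟨x, y, tle_refl x, tle_refl y, rfl⟩
  | tail _ h ih =>
    rcases ih with ⟨x', y', hx, hy, rfl⟩ | hz
    · cases h with
      | rot => exact .inr (tle_node (tle_refl leaf) (tle_node hx hy))
      | left _ h =>
        obtain ⟨x'', h'', rfl⟩ := h.exists_of_node_leaf
        exact .inl ⟨x'', y', hx.tail h'', hy, rfl⟩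
      | right _ h => exact .inl ⟨x', _, hx, hy.tail h, rfl⟩
    · exact .inr (hz.tail h)

theorem upset_node_node_leaf (x y : PBT) :
    upset (node (node leaf x) y) =
      ((upset x ×ˢ upset y).image fun p => node (node leaf p.1) p.2) ∪
        upset (node leaf (node x y)) := by
  ext z
  simp only [mem_upset, Finset.mem_union, Finset.mem_image, Finset.mem_product, Prod.exists]
  constructor
  · rintro h
    rcases tle_node_node_leaf h with ⟨x', y', hx, hy, rfl⟩ | hz
    · exact .inl ⟨x', y', ⟨hx, hy⟩, rfl⟩
    · exact .inr hz
  · rintro (⟨x', y', ⟨hx, hy⟩, rfl⟩ | hz)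
    · exact tle_node (tle_node (tle_refl leaf) hx) hy
    · exact .head (.rot leaf x y) hz

theorem disjoint_image_upset_node_leaf (x y : PBT) :
    Disjoint ((upset x ×ˢ upset y).image fun p => node (node leaf p.1) p.2)
      (upset (node leaf (node x y))) := by
  refine Finset.disjoint_left.2 fun z hz hz' => ?_
  obtain ⟨_, _, rfl⟩ := Finset.mem_image.1 hz
  obtain ⟨_, _, h⟩ := (mem_upset.1 hz').exists_of_node_leaf
  cases h

noncomputable def bilinHom (f : PBT → PBT → ZY) : ZY →+ ZY →+ ZY :=
  Finsupp.liftAddHom fun x =>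
    zmultiplesHom _ (Finsupp.liftAddHom fun y => zmultiplesHom ZY (f x y))

theorem bilinHom_apply (f : PBT → PBT → ZY) (a b : ZY) : bilinHom f a b = bilin f a b := by
  simp [bilinHom, bilin, Finsupp.sum, AddMonoidHom.finsetSum_apply, Finset.smul_sum, mul_smul]

theorem bilin_S_S (f : PBT → PBT → ZY) (x y : PBT) : bilin f (S x) (S y) = f x y := by
  simp [bilin, S]

theorem bilin_sum_sum {ι κ : Type*} (f : PBT → PBT → ZY) (s : Finset ι) (t : Finset κ)
    (g : ι → PBT) (h : κ → PBT) :
    bilin f (∑ i ∈ s, S (g i)) (∑ j ∈ t, S (h j)) =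
      ∑ i ∈ s, ∑ j ∈ t, f (g i) (h j) := by
  rw [← bilinHom_apply, map_sum (bilinHom f), AddMonoidHom.finsetSum_apply]
  simp only [map_sum, bilinHom_apply, bilin_S_S]

theorem bilin_neg_neg (f : PBT → PBT → ZY) (a b : ZY) : bilin f (-a) (-b) = bilin f a b := by
  simp only [← bilinHom_apply, map_neg, AddMonoidHom.neg_apply, neg_neg]

theorem overM_neg_neg (a b : ZY) : overM (-a) (-b) = overM a b := bilin_neg_neg _ a b

theorem starM_neg_neg (a b : ZY) : starM (-a) (-b) = starM a b := bilin_neg_neg _ a b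

noncomputable def overHom : ZY →+ ZY →+ ZY := bilinHom fun x y => S (x.overT y)

noncomputable def starHom : ZY →+ ZY →+ ZY := bilinHom starB

@[simp] theorem overHom_apply (a b : ZY) : overHom a b = overM a b := bilinHom_apply _ a b

@[simp] theorem starHom_apply (a b : ZY) : starHom a b = starM a b := bilinHom_apply _ a b

theorem P_eq_sum_downset (x : PBT) : P x = ∑ y ∈ downset x, S y := rfl

theorem I_eq_sum_upset (x : PBT) : I x = ∑ y ∈ upset x, S y := rfl

theorem P_eq_S_of_size_le_one {x : PBT} (hx : x.size ≤ 1) : P x = S x := by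
  have : downset x = {x} := by
    ext z
    rw [mem_downset, Finset.mem_singleton]
    exact ⟨fun h => eq_of_size_eq_of_size_le_one h.size_eq (h.size_eq ▸ hx),
      fun h => h ▸ tle_refl x⟩
  rw [P_eq_sum_downset, this, Finset.sum_singleton]

theorem I_eq_S_of_size_le_one {x : PBT} (hx : x.size ≤ 1) : I x = S x := by
  have : upset x = {x} := by
    ext z
    rw [mem_upset, Finset.mem_singleton]
    exact ⟨fun h => (eq_of_size_eq_of_size_le_one h.size_eq hx).symm, fun h => h ▸ tle_refl x⟩
  rw [I_eq_sum_upset, this, Finset.sum_singleton]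

theorem P_leaf : P leaf = S leaf := P_eq_S_of_size_le_one zero_le_one

theorem I_leaf : I leaf = S leaf := I_eq_S_of_size_le_one zero_le_one

theorem P_dot : P dot = S dot := P_eq_S_of_size_le_one le_rfl

theorem I_dot : I dot = S dot := I_eq_S_of_size_le_one le_rfl

theorem overM_P_P (x y : PBT) : overM (P x) (P y) = P (overT x y) := by
  rw [P_eq_sum_downset, P_eq_sum_downset, P_eq_sum_downset, overM, bilin_sum_sum,
    ← Finset.sum_product', downset_overT, Finset.sum_image (injOn_overT_downset x y)]

theorem starM_P_P (x y : PBT) : starM (P x) (P y) = P (under x y) := by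
  rw [P_eq_sum_downset, P_eq_sum_downset, P_eq_sum_downset, starM, bilin_sum_sum,
    ← Finset.sum_product', downset_under, Finset.sum_biUnion
      (pairwiseDisjoint_interval (n := x.size) fun u hu => (mem_downset.1 hu).size_eq)]
  rfl

theorem starM_I_I (x y : PBT) : starM (I x) (I y) = I (overT x y) := by
  rw [I_eq_sum_upset, I_eq_sum_upset, I_eq_sum_upset, starM, bilin_sum_sum,
    ← Finset.sum_product', upset_overT, Finset.sum_biUnion
      (pairwiseDisjoint_interval (n := x.size) fun u hu => (mem_upset.1 hu).size_eq.symm)]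
  rfl

theorem I_node_leaf (x : PBT) : I (node leaf x) = ∑ x' ∈ upset x, S (node leaf x') := by
  rw [I_eq_sum_upset, upset_node_leaf, Finset.sum_image fun _ _ _ _ h => (node.inj h).2]

theorem overM_sub_starM_I_node_leaf (u v : PBT) :
    overM (I (node leaf u)) (I (node leaf v)) - starM (I (node leaf u)) (I (node leaf v)) =
      -I (node leaf (node u v)) := by
  have hinj :
      Set.InjOn (fun p : PBT × PBT => node (node leaf p.1) p.2) ↑(upset u ×ˢ upset v) :=
    fun p _ q _ h => by
      simp only [node.injEq, true_and] at h
      exact Prod.ext h.1 h.2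
  rw [starM_I_I, I_node_leaf u, I_node_leaf v, overM, bilin_sum_sum, ← Finset.sum_product',
    I_eq_sum_upset, overT_node_leaf,
    upset_node_node_leaf, Finset.sum_union (disjoint_image_upset_node_leaf u v),
    Finset.sum_image hinj, ← I_eq_sum_upset]
  simp only [overT_node_leaf]
  abel

theorem starM_S_dot_P (v : PBT) : starM (S dot) (P v) = P (node leaf v) := by
  rw [← P_dot, starM_P_P]
  rfl

theorem starM_S_dot_overM_P (u v : PBT) :
    starM (S dot) (overM (P u) (starM (S dot) (P v))) = P (node leaf (node u v)) := by
  rw [starM_S_dot_P, overM_P_P, overT_node_leaf, starM_S_dot_P]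

theorem S_eq_P_sub_sum (x : PBT) : S x = P x - ∑ y ∈ (downset x).erase x, S y := by
  rw [P_eq_sum_downset, ← Finset.add_sum_erase _ _ (mem_downset.2 (tle_refl x)),
    add_sub_cancel_right]

theorem addHom_ext_P {M : Type*} [AddCommGroup M] {ψ χ : ZY →+ M}
    (h : ∀ x, ψ (P x) = χ (P x)) : ψ = χ := by
  have hS (x : PBT) : ψ (S x) = χ (S x) := by
    induction x using (measure rank).wf.induction with
    | h x ih =>
      rw [S_eq_P_sub_sum, map_sub, map_sub, h, map_sum, map_sum]
      refine congrArg _ (Finset.sum_congr rfl fun y hy => ih y ?_)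
      obtain ⟨hne, hy⟩ := Finset.mem_erase.1 hy
      exact (mem_downset.1 hy).rank_lt hne
  refine Finsupp.addHom_ext fun x c => ?_
  rw [← Finsupp.smul_single_one, map_zsmul, map_zsmul]
  exact congrArg (c • ·) (hS x)

theorem addHom_ext₂_P {M : Type*} [AddCommGroup M] {F G : ZY →+ ZY →+ M}
    (h : ∀ x y, F (P x) (P y) = G (P x) (P y)) : F = G :=
  addHom_ext_P fun x => addHom_ext_P (h x)

section Coxeter

variable {φ : ZY →+ ZY}

theorem map_P_eq_neg_I_of_conditions (h_leaf : φ (S leaf) = -S leaf) (h_dot : φ (S dot) = -S dot)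
    (h_over : ∀ a b : ZY, φ (overM a b) = -starM (φ a) (φ b))
    (h_star : ∀ a b : ZY, φ (starM (S dot) (overM a (starM (S dot) b))) =
      overM (φ (starM (S dot) a)) (φ (starM (S dot) b)) -
        starM (φ (starM (S dot) a)) (φ (starM (S dot) b))) :
    ∀ x : PBT, φ (P x) = -I x
  | leaf => by rw [P_leaf, I_leaf, h_leaf]
  | node leaf leaf => by rw [← dot, P_dot, I_dot, h_dot]
  | node leaf (node u v) => by
    have h := h_star (P u) (P v)
    rwa [starM_S_dot_overM_P, starM_S_dot_P, starM_S_dot_P,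
      map_P_eq_neg_I_of_conditions h_leaf h_dot h_over h_star (node leaf u),
      map_P_eq_neg_I_of_conditions h_leaf h_dot h_over h_star (node leaf v),
      overM_neg_neg, starM_neg_neg, overM_sub_starM_I_node_leaf] at h
  | node (node a₁ a₂) b => by
    have h := h_over (P (node a₁ a₂)) (P (node leaf b))
    rwa [overM_P_P, overT_node_leaf,
      map_P_eq_neg_I_of_conditions h_leaf h_dot h_over h_star (node a₁ a₂),
      map_P_eq_neg_I_of_conditions h_leaf h_dot h_over h_star (node leaf b),
      starM_neg_neg, starM_I_I, overT_node_leaf] at h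
termination_by x => x.size
decreasing_by all_goals simp only [size]; omega

variable (hφ : ∀ x : PBT, φ (P x) = -I x)
include hφ

theorem map_overM_of_map_P (a b : ZY) : φ (overM a b) = -starM (φ a) (φ b) := by
  have key : overHom.compr₂ φ = -(starHom.comp φ).compl₂ φ := addHom_ext₂_P fun x y => by
    simp only [AddMonoidHom.compr₂_apply, AddMonoidHom.neg_apply, AddMonoidHom.compl₂_apply,
      AddMonoidHom.comp_apply, overHom_apply, starHom_apply]
    rw [overM_P_P, hφ, hφ, hφ, starM_neg_neg, starM_I_I]
  simpa using DFunLike.congr_fun (DFunLike.congr_fun key a) b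

theorem map_starM_S_dot_overM_of_map_P (a b : ZY) :
    φ (starM (S dot) (overM a (starM (S dot) b))) =
      overM (φ (starM (S dot) a)) (φ (starM (S dot) b)) -
        starM (φ (starM (S dot) a)) (φ (starM (S dot) b)) := by
  set D := starHom (S dot)
  set Φ := φ.comp D
  have key : (overHom.compl₂ D).compr₂ Φ =
      (overHom.comp Φ).compl₂ Φ - (starHom.comp Φ).compl₂ Φ :=
    addHom_ext₂_P fun x y => by
      simp only [D, Φ, AddMonoidHom.compr₂_apply, AddMonoidHom.sub_apply,
        AddMonoidHom.compl₂_apply, AddMonoidHom.comp_apply, overHom_apply, starHom_apply]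
      rw [starM_S_dot_overM_P, starM_S_dot_P, starM_S_dot_P, hφ, hφ, hφ, overM_neg_neg,
        starM_neg_neg, overM_sub_starM_I_node_leaf]
  simpa [D, Φ] using DFunLike.congr_fun (DFunLike.congr_fun key a) b

end Coxeter

end PBT

open PBT in
/-- The family of Coxeter transformations is the unique family of additive maps
satisfying the four listed conditions; in particular these conditions force
`φ(P_x) = -I_x` for every planar binary tree `x`. -/
theorem coxeter_transformation_characterization (φ : ZY →+ ZY) :
    (φ (S .leaf) = - S .leaf ∧
      φ (S dot) = - S dot ∧
      (∀ a b : ZY, φ (overM a b) = - starM (φ a) (φ b)) ∧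
      (∀ a b : ZY, φ (starM (S dot) (overM a (starM (S dot) b))) =
          overM (φ (starM (S dot) a)) (φ (starM (S dot) b))
            - starM (φ (starM (S dot) a)) (φ (starM (S dot) b))))
    ↔ (∀ x : PBT, φ (P x) = - I x) := by
  constructor
  · rintro ⟨h_leaf, h_dot, h_over, h_star⟩
    exact map_P_eq_neg_I_of_conditions h_leaf h_dot h_over h_star
  · intro hφ
    refine ⟨?_, ?_, map_overM_of_map_P hφ, map_starM_S_dot_overM_of_map_P hφ⟩
    · simpa only [P_leaf, I_leaf] using hφ leaf
    · simpa only [P_dot, I_dot] using hφ dot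
end

section
/- For every integer j ≥ 1, the following identity holds in the ring ℚ[[x]] of formal power series: −∑_{n ≥ 1, j ∣ 2n} (j/(2n)) · (−1)^{2n·n/j} · x^{2n/j} = ∑_{n ≥ 1, j ∣ 2n} (j/(2n)) · λ(2n/j) · (−1)^{2n(n−1)/j} · (x·(1−x²)^{−1})^{2n/j}. (Both infinite sums are well defined coefficientwise, since the summand indexed by n has order ≥ 2n/j in x, and 1−x² is invertible in ℚ[[x]].) -/
/-!
Put `l = 2n/j`, so that `n = jl/2`; the `n`-th summands become `± x^l/l` and `± λ(l) y^l/l`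
with `y = x/(1-x²)`. Since `[x^k] y^l = C((k+l)/2 - 1, l - 1)` for `l ≤ k`, `l ≡ k (mod 2)`, and
vanishes otherwise, the coefficient of `x^k` is a single term on the left and a finite binomial sum
on the right. Both vanish unless `jk` is even, and then the signs cancel and the claim becomes
  `∑_{s<K} (-1)^s C(2s+1,s) C(K+s,2s+1)/(2s+2) = 1/(2K)`     for `k = 2K`,
  `∑_{r≤K} (-1)^r C(2r,r) C(K+r,2r)/(2r+1) = 1/(2K+1)`       for `k = 2K+1`, `j` even.
Both follow by creative telescoping: `k` times the sum does not depend on `K`, because the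
summands satisfy a first-order recurrence in `K` up to a difference that telescopes in the
summation index.
-/

/-- `λ(m) = (−1)^(m(m−1)/2) · binomial(m−1, ⌊(m−1)/2⌋)`. -/
def lam (m : ℕ) : ℤ := (-1) ^ (m * (m - 1) / 2) * (m - 1).choose ((m - 1) / 2)

open PowerSeries in
/-- The summand indexed by `n` on the left-hand side:
`(j/(2n)) · (−1)^(2n·n/j) · x^(2n/j)` when `j ∣ 2n`, and `0` otherwise. -/
noncomputable def lhsTerm (j n : ℕ) : PowerSeries ℚ :=
  if j ∣ 2 * n then
    C ((j : ℚ) / (2 * n) * (-1) ^ (2 * n * n / j)) * X ^ (2 * n / j)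
  else 0

open PowerSeries in
/-- The summand indexed by `n` on the right-hand side:
`(j/(2n)) · λ(2n/j) · (−1)^(2n(n−1)/j) · (x·(1−x²)⁻¹)^(2n/j)` when `j ∣ 2n`. -/
noncomputable def rhsTerm (j n : ℕ) : PowerSeries ℚ :=
  if j ∣ 2 * n then
    C ((j : ℚ) / (2 * n) * (lam (2 * n / j) : ℚ) * (-1) ^ (2 * n * (n - 1) / j)) *
      (X * (1 - X ^ 2)⁻¹) ^ (2 * n / j)
  else 0

open PowerSeries Finset

lemma lam_two_mul_add_one (r : ℕ) : lam (2 * r + 1) = (-1) ^ r * (2 * r).choose r := by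
  unfold lam
  rw [show 2 * r + 1 - 1 = 2 * r by omega,
    show (2 * r + 1) * (2 * r) / 2 = (2 * r + 1) * r by
      rw [show (2 * r + 1) * (2 * r) = (2 * r + 1) * r * 2 by ring]
      exact Nat.mul_div_cancel _ two_pos,
    show 2 * r / 2 = r by omega, pow_mul, Odd.neg_one_pow ⟨r, by ring⟩]

lemma lam_two_mul_add_two (s : ℕ) : lam (2 * s + 2) = -((-1) ^ s * (2 * s + 1).choose s) := by
  unfold lam
  rw [show 2 * s + 2 - 1 = 2 * s + 1 by omega,
    show (2 * s + 2) * (2 * s + 1) / 2 = (2 * s + 1) * (s + 1) by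
      rw [show (2 * s + 2) * (2 * s + 1) = (2 * s + 1) * (s + 1) * 2 by ring]
      exact Nat.mul_div_cancel _ two_pos,
    show (2 * s + 1) / 2 = s by omega, pow_mul, Odd.neg_one_pow ⟨s, by ring⟩]
  ring

lemma neg_one_pow_odd_mul {R : Type*} [Monoid R] [HasDistribNeg R] (r m : ℕ) :
    (-1 : R) ^ ((2 * r + 1) * m) = (-1) ^ m := by
  rw [pow_mul, Odd.neg_one_pow (odd_two_mul_add_one r)]

section Choose

variable {R : Type*} [CommRing R]

lemma cast_choose_mul_add_one (n k : ℕ) :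
    (n.choose k : R) * (n + 1) = (n + 1).choose k * ((n : R) + 1 - k) := by
  rcases le_or_gt k (n + 1) with hk | hk
  · have := congrArg (Nat.cast : ℕ → R) (Nat.choose_mul_succ_eq n k)
    push_cast [Nat.cast_sub hk] at this
    exact this
  · simp [Nat.choose_eq_zero_of_lt hk, Nat.choose_eq_zero_of_lt (show n < k by omega)]

lemma cast_choose_succ_right_mul (n k : ℕ) :
    (n.choose (k + 1) : R) * (k + 1) = n.choose k * ((n : R) - k) := by
  rcases le_or_gt k n with hk | hk
  · have := congrArg (Nat.cast : ℕ → R) (Nat.choose_succ_right_eq n k)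
    push_cast [Nat.cast_sub hk] at this
    exact this
  · simp [Nat.choose_eq_zero_of_lt hk, Nat.choose_eq_zero_of_lt (show n < k + 1 by omega)]

end Choose

lemma cast_choose_two_mul_succ (r : ℕ) :
    ((2 * (r + 1)).choose (r + 1) : ℚ) = 2 * (2 * r + 1) * (2 * r).choose r / (r + 1) := by
  rw [eq_div_iff (by positivity), mul_comm]
  have := Nat.succ_mul_centralBinom_succ r
  rw [Nat.centralBinom_eq_two_mul_choose, Nat.centralBinom_eq_two_mul_choose] at this
  exact_mod_cast this

lemma cast_choose_two_mul (r : ℕ) :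
    ((2 * r).choose r : ℚ) = (r + 1) * (2 * r + 1).choose r / (2 * r + 1) := by
  rw [eq_div_iff (by positivity), ← Nat.choose_symm_half, mul_comm]
  exact_mod_cast (Nat.add_one_mul_choose_eq (2 * r) r).trans (mul_comm _ _)

def oddTerm (K r : ℕ) : ℚ :=
  (-1) ^ r * (2 * r).choose r * (K + r).choose (2 * r) / (2 * r + 1)

-- `oddCert` and `evenCert` are the certificates produced by Zeilberger's algorithm.
def oddCert (K r : ℕ) : ℚ :=
  (-1) ^ r * 2 * r ^ 2 * (2 * r).choose r * (K + r + 1).choose (2 * r) / ((K + 1) * (K + r + 1))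

lemma oddTerm_recurrence (K r : ℕ) :
    (2 * K + 3) * oddTerm (K + 1) r - (2 * K + 1) * oddTerm K r =
      oddCert K r - oddCert K (r + 1) := by
  have hprev : ((K + r).choose (2 * r) : ℚ) =
      (K + r + 1).choose (2 * r) * (K + 1 - r) / (K + r + 1) := by
    rw [eq_div_iff (by positivity)]
    have := cast_choose_mul_add_one (R := ℚ) (K + r) (2 * r)
    push_cast at this
    linear_combination this
  have hnext : ((K + r + 1 + 1).choose (2 * (r + 1)) : ℚ) =
      (K + r + 1).choose (2 * r) * (K + 1 - r) * (K + r + 2) / ((2 * r + 1) * (2 * r + 2)) := by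
    rw [eq_div_iff (by positivity), show 2 * (r + 1) = 2 * r + 1 + 1 by ring]
    have h1 := cast_choose_succ_right_mul (R := ℚ) (K + r + 1) (2 * r)
    have h2 : ((K + r + 1 + 1 : ℕ) : ℚ) * (K + r + 1).choose (2 * r + 1) =
        (K + r + 1 + 1).choose (2 * r + 1 + 1) * ((2 * r + 1 + 1 : ℕ) : ℚ) := by
      exact_mod_cast Nat.add_one_mul_choose_eq (K + r + 1) (2 * r + 1)
    push_cast at h1 h2
    linear_combination (K + r + 2 : ℚ) * h1 - (2 * r + 1 : ℚ) * h2
  simp only [oddTerm, oddCert, show K + 1 + r = K + r + 1 by omega,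
    show K + (r + 1) + 1 = K + r + 1 + 1 by omega]
  rw [cast_choose_two_mul_succ, hnext, hprev]
  push_cast
  field_simp
  ring

lemma sum_oddTerm (K : ℕ) : ∑ r ∈ range (K + 1), oddTerm K r = 1 / (2 * K + 1) := by
  induction K with
  | zero => simp [oddTerm]
  | succ K ih =>
    have htel : ∑ r ∈ range (K + 2),
        ((2 * K + 3) * oddTerm (K + 1) r - (2 * K + 1) * oddTerm K r) = 0 := by
      rw [sum_congr rfl fun r _ => oddTerm_recurrence K r, sum_range_sub']
      simp [oddCert, Nat.choose_eq_zero_of_lt (show K + (K + 2) + 1 < 2 * (K + 2) by omega)]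
    have hlast : oddTerm K (K + 1) = 0 := by
      simp [oddTerm, Nat.choose_eq_zero_of_lt (show K + (K + 1) < 2 * (K + 1) by omega)]
    rw [sum_sub_distrib, ← mul_sum, ← mul_sum, sum_range_succ (oddTerm K), ih, hlast] at htel
    push_cast
    field_simp at htel ⊢
    linarith

def evenTerm (K s : ℕ) : ℚ :=
  (-1) ^ s * (2 * s + 1).choose s * (K + s).choose (2 * s + 1) / (2 * s + 2)

def evenCert (K s : ℕ) : ℚ :=
  (-1) ^ s * (2 * K + 1) * s * (2 * s).choose s * (K + s).choose (2 * s) / (K * (K + 1))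

lemma evenTerm_recurrence {K : ℕ} (hK : 0 < K) (s : ℕ) :
    (2 * K + 2) * evenTerm (K + 1) s - 2 * K * evenTerm K s =
      evenCert K s - evenCert K (s + 1) := by
  have hprev : ((K + s).choose (2 * s + 1) : ℚ) =
      (K + s + 1).choose (2 * s + 1) * (K - s) / (K + s + 1) := by
    rw [eq_div_iff (by positivity)]
    have := cast_choose_mul_add_one (R := ℚ) (K + s) (2 * s + 1)
    push_cast at this
    linear_combination this
  have hprev' : ((K + s).choose (2 * s) : ℚ) =
      (K + s + 1).choose (2 * s + 1) * (2 * s + 1) / (K + s + 1) := by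
    rw [eq_div_iff (by positivity)]
    have : ((K + s + 1 : ℕ) : ℚ) * (K + s).choose (2 * s) =
        (K + s + 1).choose (2 * s + 1) * ((2 * s + 1 : ℕ) : ℚ) := by
      exact_mod_cast Nat.add_one_mul_choose_eq (K + s) (2 * s)
    push_cast at this
    linear_combination this
  have hnext : ((K + s + 1).choose (2 * (s + 1)) : ℚ) =
      (K + s + 1).choose (2 * s + 1) * (K - s) / (2 * s + 2) := by
    rw [eq_div_iff (by positivity), show 2 * (s + 1) = 2 * s + 1 + 1 by ring]
    have := cast_choose_succ_right_mul (R := ℚ) (K + s + 1) (2 * s + 1)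
    push_cast at this
    linear_combination this
  simp only [evenTerm, evenCert, show K + 1 + s = K + s + 1 by omega,
    show K + (s + 1) = K + s + 1 by omega]
  rw [cast_choose_two_mul_succ, hnext, hprev, hprev', cast_choose_two_mul]
  have : (K : ℚ) ≠ 0 := by positivity
  push_cast
  field_simp
  ring

lemma sum_evenTerm {K : ℕ} (hK : 0 < K) : ∑ s ∈ range K, evenTerm K s = 1 / (2 * K) := by
  induction K, hK using Nat.le_induction with
  | base => norm_num [evenTerm]
  | succ K hK ih =>
    have htel : ∑ s ∈ range (K + 1),
        ((2 * K + 2) * evenTerm (K + 1) s - 2 * K * evenTerm K s) = 0 := by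
      rw [sum_congr rfl fun s _ => evenTerm_recurrence hK s, sum_range_sub']
      simp [evenCert, Nat.choose_eq_zero_of_lt (show K + (K + 1) < 2 * (K + 1) by omega)]
    have hlast : evenTerm K K = 0 := by
      simp [evenTerm, Nat.choose_eq_zero_of_lt (show K + K < 2 * K + 1 by omega)]
    rw [sum_sub_distrib, ← mul_sum, ← mul_sum, sum_range_succ (evenTerm K), ih, hlast] at htel
    have : (K : ℚ) ≠ 0 := by positivity
    push_cast
    field_simp at htel ⊢
    linarith

section InvOneSubXSq

variable {K : Type*} [Field K]

lemma inv_one_sub_X_sq_pow_eq_expand (d : ℕ) :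
    ((1 - X ^ 2 : K⟦X⟧)⁻¹) ^ (d + 1) =
      expand 2 two_ne_zero (mk fun n => ((d + n).choose d : K)) := by
  have hmul : expand 2 two_ne_zero (mk fun n => ((d + n).choose d : K)) *
      (1 - X ^ 2) ^ (d + 1) = 1 := by
    simpa using congrArg (expand 2 two_ne_zero) (mk_add_choose_mul_one_sub_pow_eq_one K d)
  refine (left_inv_eq_right_inv hmul ?_).symm
  rw [← mul_pow, PowerSeries.mul_inv_cancel _ (by simp), one_pow]

lemma coeff_X_mul_inv_one_sub_X_sq_pow (d k : ℕ) :
    coeff k ((X * (1 - X ^ 2)⁻¹ : K⟦X⟧) ^ (d + 1)) =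
      if d + 1 ≤ k ∧ 2 ∣ k - (d + 1) then ((d + (k - (d + 1)) / 2).choose d : K) else 0 := by
  rw [mul_pow, inv_one_sub_X_sq_pow_eq_expand, coeff_X_pow_mul', coeff_expand, coeff_mk]
  by_cases hk : d + 1 ≤ k <;> simp [hk]

end InvOneSubXSq

lemma tsum_ite_dvd_two_mul_eq {α : Type*} [AddCommMonoid α] [TopologicalSpace α] {j : ℕ}
    (hj : 0 < j) (f : ℕ → α) :
    ∑' m : ℕ, (if j ∣ 2 * (m + 1) then f (2 * (m + 1) / j) else 0) =
      ∑' l : ℕ, if 0 < l ∧ 2 ∣ j * l then f l else 0 := by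
  have hsupp {l : ℕ} (hl : l ∈ Function.support fun l => if 0 < l ∧ 2 ∣ j * l then f l else 0) :
      0 < l ∧ 2 ∣ j * l ∧ f l ≠ 0 := by
    simpa [Function.mem_support] using hl
  refine tsum_eq_tsum_of_ne_zero_bij (fun l => j * l.1 / 2 - 1) ?_ ?_ ?_
  · rintro ⟨x, hx⟩ ⟨y, hy⟩ hxy
    obtain ⟨hx0, hx2, -⟩ := hsupp hx
    obtain ⟨hy0, hy2, -⟩ := hsupp hy
    have : 0 < j * x := Nat.mul_pos hj hx0
    have : 0 < j * y := Nat.mul_pos hj hy0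
    have hxy : j * x / 2 - 1 = j * y / 2 - 1 := hxy
    exact Subtype.ext (Nat.eq_of_mul_eq_mul_left hj (show j * x = j * y by omega))
  · intro m hm
    have hd : j ∣ 2 * (m + 1) := by by_contra h; simp [h] at hm
    have hjl := Nat.mul_div_cancel' hd
    refine ⟨⟨2 * (m + 1) / j, ?_⟩, by simp only; omega⟩
    simp only [Function.mem_support, if_pos hd] at hm
    rw [Function.mem_support, if_pos ⟨Nat.pos_of_ne_zero (by rintro h; simp [h] at hjl),
      (⟨m + 1, hjl⟩ : 2 ∣ j * (2 * (m + 1) / j))⟩]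
    exact hm
  · rintro ⟨l, hl⟩
    obtain ⟨hl0, hl2, -⟩ := hsupp hl
    have : 0 < j * l := Nat.mul_pos hj hl0
    have h : 2 * (j * l / 2 - 1 + 1) = j * l := by omega
    show (if j ∣ 2 * (j * l / 2 - 1 + 1) then f (2 * (j * l / 2 - 1 + 1) / j) else 0) = _
    rw [h, if_pos (dvd_mul_right j l), Nat.mul_div_cancel_left l hj, if_pos ⟨hl0, hl2⟩]

noncomputable def lhsSummand (j l : ℕ) : ℚ⟦X⟧ :=
  C ((l : ℚ)⁻¹ * (-1) ^ (l * (j * l / 2))) * X ^ l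

noncomputable def rhsSummand (j l : ℕ) : ℚ⟦X⟧ :=
  C ((l : ℚ)⁻¹ * lam l * (-1) ^ (l * (j * l / 2 - 1))) * (X * (1 - X ^ 2)⁻¹) ^ l

lemma lhsTerm_eq {j : ℕ} (hj : 0 < j) (n : ℕ) :
    lhsTerm j n = if j ∣ 2 * n then lhsSummand j (2 * n / j) else 0 := by
  unfold lhsTerm lhsSummand
  split_ifs with h
  · obtain ⟨l, hl⟩ := h
    have hq : 2 * (n : ℚ) = j * l := by exact_mod_cast hl
    rw [hl, Nat.mul_div_cancel_left l hj, hq, div_mul_cancel_left₀ (by positivity),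
      Nat.mul_assoc, Nat.mul_div_cancel_left _ hj, show n = j * l / 2 by omega]
  · rfl

lemma rhsTerm_eq {j : ℕ} (hj : 0 < j) (n : ℕ) :
    rhsTerm j n = if j ∣ 2 * n then rhsSummand j (2 * n / j) else 0 := by
  unfold rhsTerm rhsSummand
  split_ifs with h
  · obtain ⟨l, hl⟩ := h
    have hq : 2 * (n : ℚ) = j * l := by exact_mod_cast hl
    rw [hl, Nat.mul_div_cancel_left l hj, hq, div_mul_cancel_left₀ (by positivity),
      Nat.mul_assoc, Nat.mul_div_cancel_left _ hj, show n = j * l / 2 by omega]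
  · rfl

lemma tsum_coeff_lhsTerm {j : ℕ} (hj : 0 < j) (k : ℕ) :
    ∑' m, coeff k (lhsTerm j (m + 1)) =
      if 0 < k ∧ 2 ∣ j * k then (k : ℚ)⁻¹ * (-1) ^ (k * (j * k / 2)) else 0 := by
  simp_rw [lhsTerm_eq hj, apply_ite (coeff k), map_zero]
  rw [tsum_ite_dvd_two_mul_eq hj fun l => coeff k (lhsSummand j l), tsum_eq_single k]
  · simp only [lhsSummand, coeff_C_mul_X_pow, if_true]
  · intro l hl
    simp only [lhsSummand, coeff_C_mul_X_pow, if_neg (Ne.symm hl), ite_self]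

lemma coeff_rhsSummand_eq_zero {j k l : ℕ} (hl : 0 < l) (h : ¬(l ≤ k ∧ 2 ∣ k - l)) :
    coeff k (rhsSummand j l) = 0 := by
  obtain ⟨d, rfl⟩ : ∃ d, l = d + 1 := ⟨l - 1, by omega⟩
  rw [rhsSummand, coeff_C_mul, coeff_X_mul_inv_one_sub_X_sq_pow, if_neg h, mul_zero]

lemma coeff_rhsSummand_two_mul_add_two (j : ℕ) {K s : ℕ} (hs : s < K) :
    coeff (2 * K) (rhsSummand j (2 * s + 2)) = -evenTerm K s := by
  have hsign : (-1 : ℚ) ^ ((2 * s + 2) * (j * (2 * s + 2) / 2 - 1)) = 1 :=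
    Even.neg_one_pow ⟨(s + 1) * (j * (2 * s + 2) / 2 - 1), by ring⟩
  rw [rhsSummand, coeff_C_mul, show 2 * s + 2 = 2 * s + 1 + 1 from rfl,
    coeff_X_mul_inv_one_sub_X_sq_pow, if_pos ⟨by omega, by omega⟩,
    show 2 * s + 1 + (2 * K - (2 * s + 1 + 1)) / 2 = K + s by omega, hsign, lam_two_mul_add_two]
  rw [evenTerm]
  push_cast
  field_simp
  ring

lemma coeff_rhsSummand_two_mul_add_one {u : ℕ} (hu : 0 < u) {K r : ℕ} (hr : r ≤ K) :
    coeff (2 * K + 1) (rhsSummand (2 * u) (2 * r + 1)) = -((-1) ^ u * oddTerm K r) := by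
  have hsign : (-1 : ℚ) ^ ((2 * r + 1) * (2 * u * (2 * r + 1) / 2 - 1)) = -(-1) ^ u := by
    have h : 2 * u * (2 * r + 1) / 2 - 1 + 1 = (2 * r + 1) * u := by
      rw [Nat.mul_assoc, Nat.mul_div_cancel_left _ two_pos, Nat.mul_comm]
      exact Nat.sub_add_cancel (Nat.mul_pos (by omega) hu)
    have h' : (-1 : ℚ) ^ (2 * u * (2 * r + 1) / 2 - 1 + 1) = (-1) ^ u := by
      rw [h, neg_one_pow_odd_mul]
    rw [neg_one_pow_odd_mul, ← neg_neg ((-1 : ℚ) ^ u), ← h', pow_succ]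
    ring
  rw [rhsSummand, coeff_C_mul, coeff_X_mul_inv_one_sub_X_sq_pow, if_pos ⟨by omega, by omega⟩,
    show 2 * r + (2 * K + 1 - (2 * r + 1)) / 2 = K + r by omega, hsign, lam_two_mul_add_one]
  rw [oddTerm]
  push_cast
  field_simp

lemma support_ite_coeff_rhsSummand_subset (j k : ℕ) :
    (Function.support fun l => if 0 < l ∧ 2 ∣ j * l then coeff k (rhsSummand j l) else 0) ⊆
      {l | 0 < l ∧ l ≤ k ∧ 2 ∣ k - l} := by
  intro l hl
  by_cases h : 0 < l ∧ 2 ∣ j * l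
  · refine ⟨h.1, not_not.mp fun hlk => hl ?_⟩
    simp only [if_pos h, coeff_rhsSummand_eq_zero h.1 hlk]
  · exact absurd (if_neg h) hl

lemma tsum_coeff_rhsSummand_two_mul (j : ℕ) {K : ℕ} (hK : 0 < K) :
    ∑' l, (if 0 < l ∧ 2 ∣ j * l then coeff (2 * K) (rhsSummand j l) else 0) = -(1 / (2 * K)) := by
  have hsupp : _ ⊆ Set.range fun s => 2 * s + 2 :=
    (support_ite_coeff_rhsSummand_subset j (2 * K)).trans fun l ⟨hl0, hlk, hd⟩ =>
      ⟨l / 2 - 1, show 2 * (l / 2 - 1) + 2 = l by omega⟩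
  have hinj : Function.Injective fun s : ℕ => 2 * s + 2 := fun a b h => by simp only at h; omega
  rw [← hinj.tsum_eq hsupp, tsum_eq_sum (s := range K)]
  · rw [sum_congr rfl fun s hs => by
      rw [if_pos ⟨by omega, ⟨j * (s + 1), by ring⟩⟩,
        coeff_rhsSummand_two_mul_add_two j (mem_range.mp hs)], sum_neg_distrib, sum_evenTerm hK]
  · intro s hs
    simp only [mem_range, not_lt] at hs
    rw [coeff_rhsSummand_eq_zero (by omega) (by omega), ite_self]

lemma tsum_coeff_rhsSummand_two_mul_add_one {u : ℕ} (hu : 0 < u) (K : ℕ) :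
    ∑' l, (if 0 < l ∧ 2 ∣ 2 * u * l then coeff (2 * K + 1) (rhsSummand (2 * u) l) else 0) =
      -((-1) ^ u / (2 * K + 1)) := by
  have hsupp : _ ⊆ Set.range fun r => 2 * r + 1 :=
    (support_ite_coeff_rhsSummand_subset (2 * u) (2 * K + 1)).trans fun l ⟨_, hlk, hd⟩ =>
      ⟨l / 2, show 2 * (l / 2) + 1 = l by omega⟩
  have hinj : Function.Injective fun r : ℕ => 2 * r + 1 := fun a b h => by simp only at h; omega
  rw [← hinj.tsum_eq hsupp, tsum_eq_sum (s := range (K + 1))]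
  · rw [sum_congr rfl fun r hr => by
      rw [if_pos ⟨by omega, ⟨u * (2 * r + 1), by ring⟩⟩,
        coeff_rhsSummand_two_mul_add_one hu (Nat.lt_succ_iff.mp (mem_range.mp hr))],
      sum_neg_distrib, ← mul_sum, sum_oddTerm]
    ring
  · intro r hr
    simp only [mem_range, not_lt] at hr
    rw [coeff_rhsSummand_eq_zero (by omega) (by omega), ite_self]

lemma coeff_rhsSummand_eq_zero_of_not_dvd {j k l : ℕ} (hjk : ¬(0 < k ∧ 2 ∣ j * k))
    (hl : 0 < l ∧ 2 ∣ j * l) : coeff k (rhsSummand j l) = 0 := by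
  refine coeff_rhsSummand_eq_zero hl.1 fun ⟨hlk, hkl⟩ => hjk ⟨by omega, ?_⟩
  have := dvd_add hl.2 (hkl.mul_left j)
  rwa [← Nat.mul_add, Nat.add_sub_cancel' hlk] at this

lemma tsum_coeff_rhsTerm {j : ℕ} (hj : 0 < j) (k : ℕ) :
    ∑' m, coeff k (rhsTerm j (m + 1)) =
      if 0 < k ∧ 2 ∣ j * k then -((k : ℚ)⁻¹ * (-1) ^ (k * (j * k / 2))) else 0 := by
  simp_rw [rhsTerm_eq hj, apply_ite (coeff k), map_zero]
  rw [tsum_ite_dvd_two_mul_eq hj fun l => coeff k (rhsSummand j l)]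
  split_ifs with hk
  · obtain ⟨K, rfl | rfl⟩ := Nat.even_or_odd' k
    · rw [tsum_coeff_rhsSummand_two_mul j (by omega),
        Even.neg_one_pow ⟨K * (j * (2 * K) / 2), by ring⟩]
      push_cast
      ring
    · obtain ⟨u, rfl⟩ : 2 ∣ j := by
        rcases (Nat.Prime.dvd_mul Nat.prime_two).mp hk.2 with h | h
        · exact h
        · omega
      rw [tsum_coeff_rhsSummand_two_mul_add_one (by omega),
        show 2 * u * (2 * K + 1) / 2 = (2 * K + 1) * u by
          rw [Nat.mul_assoc, Nat.mul_div_cancel_left _ two_pos, Nat.mul_comm],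
        neg_one_pow_odd_mul, neg_one_pow_odd_mul]
      push_cast
      ring
  · refine (tsum_congr fun l => ?_).trans tsum_zero
    split_ifs with hl
    · exact coeff_rhsSummand_eq_zero_of_not_dvd hk hl
    · rfl

open PowerSeries in
/-- For every integer `j ≥ 1`, the identity
`−∑_{n ≥ 1, j ∣ 2n} (j/(2n)) (−1)^(2n·n/j) x^(2n/j)
  = ∑_{n ≥ 1, j ∣ 2n} (j/(2n)) λ(2n/j) (−1)^(2n(n−1)/j) (x(1−x²)⁻¹)^(2n/j)`
holds in `ℚ[[x]]`, both sides being defined coefficientwise. -/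
theorem series_identity (j : ℕ) (hj : 1 ≤ j) :
    (PowerSeries.mk fun k => -(∑' m : ℕ, coeff k (lhsTerm j (m + 1)))) =
      PowerSeries.mk fun k => ∑' m : ℕ, coeff k (rhsTerm j (m + 1)) := by
  ext k
  rw [coeff_mk, coeff_mk, tsum_coeff_lhsTerm hj, tsum_coeff_rhsTerm hj]
  split_ifs <;> simp
end

section
/- In the ring ℚ[[x]] of formal power series, ∑_{n ≥ 1} (−1)^{n−1} · c_{n−1} · (x·(1−x²)^{−1})^{2n−1} = x, where c_k = binomial(2k,k)/(k+1) is the k-th Catalan number. Equivalently, the formal power series f(t) = ∑_{n ≥ 1} (−1)^{n−1} c_{n−1} t^{2n−1} and g(t) = t·(1−t²)^{−1} are compositional inverses of one another. -/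
open PowerSeries in
/-- The summand indexed by `n ≥ 1`: `(−1)^(n−1) · c_{n−1} · (x·(1−x²)⁻¹)^(2n−1)`,
where `c_k` is the `k`-th Catalan number. -/
noncomputable def catalanTerm (n : ℕ) : PowerSeries ℚ :=
  C ((-1) ^ (n - 1) * (catalan (n - 1) : ℚ)) * (X * (1 - X ^ 2)⁻¹) ^ (2 * n - 1)

/-!
Put `u = x(1 − x²)⁻¹`, so that `y = x` solves `y + u y² = u`. With `C(z)` the Catalan generating
function, `S = u C(−u²)` solves the same equation because `C = 1 + z C²`. Truncating `C` after `N`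
terms keeps this equation modulo `u^(2N+1)`, and since `1 + u (S + x)` is a unit, the identity
`(S − x)(1 + u (S + x)) = (S + u S² − u) − (x + u x² − u)` shows that the `N`-th partial sum
of `S` agrees with `x` modulo `x^(2N+1)`.
-/

open Finset PowerSeries

theorem PowerSeries.X_pow_dvd_coe_iff {R : Type*} [CommRing R] {p : Polynomial R} {n : ℕ} :
    (X : R⟦X⟧) ^ n ∣ (p : R⟦X⟧) ↔ Polynomial.X ^ n ∣ p := by
  simp only [PowerSeries.X_pow_dvd_iff, Polynomial.X_pow_dvd_iff, Polynomial.coeff_coe]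

section CatalanTruncation

variable {R : Type*} [CommRing R]

variable (R) in
noncomputable def catalanTrunc (N : ℕ) : Polynomial R :=
  trunc N (map (Nat.castRingHom R) catalanSeries)

theorem eval_catalanTrunc (N : ℕ) (z : R) :
    (catalanTrunc R N).eval z = ∑ m ∈ range N, (catalan m : R) * z ^ m := by
  simp [catalanTrunc, Polynomial.eval, eval₂_trunc_eq_sum_range]

theorem X_pow_dvd_one_add_X_mul_catalanTrunc_sq_sub (N : ℕ) :
    Polynomial.X ^ N ∣ 1 + Polynomial.X * catalanTrunc R N ^ 2 - catalanTrunc R N := by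
  set c := map (Nat.castRingHom R) catalanSeries
  have hc : c ^ 2 * X + 1 = c := by
    simpa using congrArg (map (Nat.castRingHom R)) catalanSeries_sq_mul_X_add_one
  set q := mk fun i ↦ coeff (i + N) c
  have hsplit : (catalanTrunc R N : R⟦X⟧) = c - X ^ N * q :=
    eq_sub_of_add_eq' (eq_X_pow_mul_shift_add_trunc N c).symm
  rw [← X_pow_dvd_coe_iff]
  refine ⟨q - 2 * X * q * c + X ^ (N + 1) * q ^ 2, ?_⟩
  push_cast
  rw [hsplit]
  linear_combination hc

def oddCatalanSum (N : ℕ) (u : R) : R :=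
  ∑ m ∈ range N, (-1) ^ m * (catalan m : R) * u ^ (2 * m + 1)

theorem oddCatalanSum_eq_mul_eval_catalanTrunc (N : ℕ) (u : R) :
    oddCatalanSum N u = u * (catalanTrunc R N).eval (-u ^ 2) := by
  rw [oddCatalanSum, eval_catalanTrunc, mul_sum]
  refine sum_congr rfl fun m _ ↦ ?_
  ring

theorem pow_dvd_oddCatalanSum_add_mul_sq_sub (N : ℕ) (u : R) :
    u ^ (2 * N + 1) ∣ oddCatalanSum N u + u * oddCatalanSum N u ^ 2 - u := by
  obtain ⟨q, hq⟩ := X_pow_dvd_one_add_X_mul_catalanTrunc_sq_sub (R := R) N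
  have hq_eval := congrArg (Polynomial.eval (-u ^ 2)) hq
  simp only [Polynomial.eval_sub, Polynomial.eval_add, Polynomial.eval_mul, Polynomial.eval_pow,
    Polynomial.eval_one, Polynomial.eval_X] at hq_eval
  refine ⟨-(-1) ^ N * q.eval (-u ^ 2), ?_⟩
  rw [oddCatalanSum_eq_mul_eval_catalanTrunc]
  linear_combination (-u) * hq_eval

end CatalanTruncation

theorem dvd_sub_of_add_mul_sq_eq {A : Type*} [CommRing A] {u y s d : A} (hy : y + u * y ^ 2 = u)
    (hunit : IsUnit (1 + u * (s + y))) (hs : d ∣ s + u * s ^ 2 - u) : d ∣ s - y := by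
  rw [← hunit.dvd_mul_right]
  convert hs using 1
  linear_combination -hy

theorem PowerSeries.X_pow_dvd_oddCatalanSum_sub {R : Type*} [CommRing R] {u y : R⟦X⟧}
    (hu : X ∣ u) (hy : y + u * y ^ 2 = u) (N : ℕ) :
    X ^ (2 * N + 1) ∣ oddCatalanSum N u - y := by
  have hunit : IsUnit (1 + u * (oddCatalanSum N u + y)) := by
    rw [isUnit_iff_constantCoeff]
    simp [X_dvd_iff.mp hu]
  exact (pow_dvd_pow_of_dvd hu _).trans
    (dvd_sub_of_add_mul_sq_eq hy hunit (pow_dvd_oddCatalanSum_add_mul_sq_sub N u))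

theorem PowerSeries.X_add_mul_X_sq_eq_X_mul_inv {k : Type*} [Field k] :
    (X : k⟦X⟧) + X * (1 - X ^ 2)⁻¹ * X ^ 2 = X * (1 - X ^ 2)⁻¹ := by
  have h : (1 - X ^ 2 : k⟦X⟧)⁻¹ * (1 - X ^ 2) = 1 := PowerSeries.inv_mul_cancel _ (by simp)
  linear_combination (-X) * h

theorem catalanTerm_succ (m : ℕ) :
    catalanTerm (m + 1) = (-1) ^ m * (catalan m : ℚ⟦X⟧) * (X * (1 - X ^ 2)⁻¹) ^ (2 * m + 1) := by
  simp [catalanTerm, Nat.mul_add]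

open PowerSeries in
/-- In `ℚ[[x]]`, `∑_{n ≥ 1} (−1)^(n−1) c_{n−1} (x·(1−x²)⁻¹)^(2n−1) = x`,
the sum being defined coefficientwise; i.e. `∑_{n≥1} (−1)^(n−1) c_{n−1} t^(2n−1)`
and `t·(1−t²)⁻¹` are compositional inverses of one another. -/
theorem catalan_series_compositional_inverse :
    (PowerSeries.mk fun k => ∑' m : ℕ, coeff k (catalanTerm (m + 1))) =
      (X : PowerSeries ℚ) := by
  have hXu : (X : ℚ⟦X⟧) ∣ X * (1 - X ^ 2)⁻¹ := dvd_mul_right _ _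
  ext k
  have htail : ∀ m ∉ range k, coeff k (catalanTerm (m + 1)) = 0 := fun m hm ↦ by
    refine (X_pow_dvd_iff (n := 2 * m + 1)).mp ?_ k (by simp at hm; omega)
    rw [catalanTerm_succ]
    exact dvd_mul_of_dvd_right (pow_dvd_pow_of_dvd hXu _) _
  have hsum : ∑ m ∈ range k, coeff k (catalanTerm (m + 1)) =
      coeff k (oddCatalanSum k (X * (1 - X ^ 2)⁻¹)) := by
    simp only [oddCatalanSum, map_sum, catalanTerm_succ]
  have hagree := X_pow_dvd_iff.mp
    (X_pow_dvd_oddCatalanSum_sub hXu X_add_mul_X_sq_eq_X_mul_inv k) k (by omega)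
  rw [coeff_mk, tsum_eq_sum htail, hsum, ← sub_eq_zero, ← map_sub, hagree]
end
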